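/- arXiv:2506.04093 — 4 statements merged into one kernel-verified Lean document; each statement's English description precedes it below -/
import Mathlib

section
/- Fix a real circulation γ and integers m ≥ 1, n ≥ 1. If 𝛀 ∈ ℂ has Im 𝛀 ≠ 0, then d_m(n, 𝛀) ≠ 0. In particular, in the genuinely collapsing case the dispersion function has no roots n ≥ 1 for any m ≥ 1. -/
open Real Complex

/-- The dispersion function of the linearized hollow vortex problem at the circular
solution: for circulation `γ ∈ ℝ`, integers `m, n`, and complex parameter `𝛀`,
`d_m(n, 𝛀) = (1 − mn)(Re 𝛀 − γ/(2π))² + (γ/π)·conj 𝛀 − (conj 𝛀)²`. -/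
noncomputable def dm (γ : ℝ) (m n : ℕ) (Om : ℂ) : ℂ :=
  (1 - (m : ℂ) * (n : ℂ)) * (((Om.re - γ / (2 * π) : ℝ)) : ℂ) ^ 2
    + (((γ / π : ℝ)) : ℂ) * (starRingEnd ℂ) Om - ((starRingEnd ℂ) Om) ^ 2

/-- **No roots of the dispersion relation in the collapsing case.**  Fix a real circulation
`γ` and integers `m ≥ 1`, `n ≥ 1`.  If `Im 𝛀 ≠ 0` (finite collapse time), then
`d_m(n, 𝛀) ≠ 0`. -/
theorem dispersion_relation_no_roots_collapsing
    (γ : ℝ) (m n : ℕ) (hm : 1 ≤ m) (hn : 1 ≤ n) (Om : ℂ) (hOm : Om.im ≠ 0) :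
    dm γ m n Om ≠ 0 := by
  intro h
  rw [dm, Complex.ext_iff] at h
  obtain ⟨hre, hi⟩ := h
  have hc : ((γ / (2 * π) : ℝ) : ℂ) = (γ:ℂ) / (2 * (π:ℂ)) := by push_cast; ring
  have hr1 : ((γ:ℂ) / (2 * (π:ℂ))).re = γ / (2 * π) := by rw [← hc, Complex.ofReal_re]
  have hi1 : ((γ:ℂ) / (2 * (π:ℂ))).im = 0 := by rw [← hc, Complex.ofReal_im]
  simp [pow_two, Complex.mul_re, Complex.mul_im] at hre hi
  rw [hr1, hi1] at hre hi
  have hpi : (0:ℝ) < π := Real.pi_pos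
  have ha : γ / π = 2 * (γ / (2 * π)) := by field_simp
  rw [ha] at hre hi
  set a := γ / (2 * π)
  set x := Om.re
  set y := Om.im
  have hx : x = a := by
    have h2 : 2 * y * (x - a) = 0 := by linarith [hi]
    rcases mul_eq_zero.mp h2 with h3 | h3
    · rcases mul_eq_zero.mp h3 with h4 | h4
      · norm_num at h4
      · exact absurd h4 hOm
    · linarith [sub_eq_zero.mp h3]
  rw [hx] at hre
  nlinarith [mul_self_pos.mpr hOm]
end

section
/- Let M ≥ 1, γ₁, …, γ_M ∈ ℝ with Σ_k γ_k ≠ 0, and let z₁, …, z_M : [0, κ) → ℂ be continuous, differentiable on (0, κ), pairwise distinct on (0, κ), and satisfy the Kirchhoff–Helmholtz system there. If there exists z_c ∈ ℂ such that z_k(t) → z_c as t ↗ κ for every k = 1, …, M, then z_c = (Σ_k γ_k z_k(0)) / (Σ_k γ_k); that is, the only possible collapse point is the center of vorticity of the initial configuration. -/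
open Real Complex ComplexConjugate

/-- **The only possible collapse point is the center of vorticity.**  Let `M ≥ 1`,
`γ₁, …, γ_M ∈ ℝ` with `Σ_k γ_k ≠ 0`, and let `z₁, …, z_M : [0, κ) → ℂ` be continuous,
pairwise distinct on `(0, κ)`, and satisfy the Kirchhoff–Helmholtz system
`d/dt conj(z_k) = Σ_{j≠k} γ_j/(2πi (z_k − z_j))` on `(0, κ)`.  If `z_k(t) → z_c` as
`t ↗ κ` for every `k`, then `z_c = (Σ_k γ_k z_k(0)) / (Σ_k γ_k)`. -/
theorem collapse_point_is_center_of_vorticity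
    (M : ℕ) (hM : 1 ≤ M) (γ : Fin M → ℝ) (hγ : ∑ k, γ k ≠ 0)
    (κ : ℝ) (hκ : 0 < κ) (z : Fin M → ℝ → ℂ)
    (hcont : ∀ k : Fin M, ContinuousOn (z k) (Set.Ico 0 κ))
    (hdist : ∀ t ∈ Set.Ioo 0 κ, ∀ j k : Fin M, j ≠ k → z j t ≠ z k t)
    (hKH : ∀ k : Fin M, ∀ t ∈ Set.Ioo 0 κ,
      HasDerivAt (fun s => conj (z k s))
        (∑ j ∈ Finset.univ.erase k, (γ j : ℂ) / (2 * (π : ℂ) * I * (z k t - z j t))) t)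
    (zc : ℂ)
    (hlim : ∀ k : Fin M, Filter.Tendsto (z k) (nhdsWithin κ (Set.Iio κ)) (nhds zc)) :
    zc = (∑ k, (γ k : ℂ) * z k 0) / (∑ k, (γ k : ℂ)) := by
  set Q : ℝ → ℂ := fun t => ∑ k, (γ k : ℂ) * conj (z k t) with hQ
  -- Q has derivative 0 on (0, κ)
  have hQderiv : ∀ t ∈ Set.Ioo 0 κ, HasDerivAt Q 0 t := by
    intro t ht
    have h1 : HasDerivAt Q
        (∑ k, (γ k : ℂ) * ∑ j ∈ Finset.univ.erase k,
          (γ j : ℂ) / (2 * (π : ℂ) * I * (z k t - z j t))) t := by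
      apply HasDerivAt.fun_sum
      intro k _
      exact (hKH k t ht).const_mul _
    convert h1 using 1
    -- the double sum vanishes by antisymmetry
    set g : Fin M → Fin M → ℂ := fun k j =>
      (γ k : ℂ) * ((γ j : ℂ) / (2 * (π : ℂ) * I * (z k t - z j t))) with hg
    have hdiag : ∀ k, g k k = 0 := by
      intro k
      simp [hg]
    have hsum : ∀ k, (∑ j ∈ Finset.univ.erase k,
        (γ j : ℂ) / (2 * (π : ℂ) * I * (z k t - z j t))) =
        (∑ j, (γ j : ℂ) / (2 * (π : ℂ) * I * (z k t - z j t))) := by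
      intro k
      apply Finset.sum_erase
      simp
    have hanti : ∀ k j, g k j = - g j k := by
      intro k j
      have h2 : (2 * (π : ℂ) * I * (z j t - z k t)) =
          -(2 * (π : ℂ) * I * (z k t - z j t)) := by ring
      rw [hg]
      simp only
      rw [h2, div_neg]
      ring
    have hD : (∑ k, (γ k : ℂ) * ∑ j ∈ Finset.univ.erase k,
        (γ j : ℂ) / (2 * (π : ℂ) * I * (z k t - z j t))) = ∑ k, ∑ j, g k j := by
      refine Finset.sum_congr rfl fun k _ => ?_
      rw [hsum k, Finset.mul_sum]
    have hzero : (∑ k, ∑ j, g k j) = 0 := by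
      have h3 : (∑ k, ∑ j, g k j) = -(∑ k, ∑ j, g k j) := by
        conv_lhs => rw [Finset.sum_comm]
        rw [← Finset.sum_neg_distrib]
        refine Finset.sum_congr rfl fun j _ => ?_
        rw [← Finset.sum_neg_distrib]
        exact Finset.sum_congr rfl fun k _ => hanti k j
      exact add_self_eq_zero.mp (by linear_combination h3)
    rw [hD, hzero]
  -- Q is continuous on [0, κ)
  have hQcont : ContinuousOn Q (Set.Ico 0 κ) := by
    apply continuousOn_finset_sum
    intro k _
    exact continuousOn_const.mul (Complex.continuous_conj.comp_continuousOn (hcont k))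
  -- Q is constant on (0, κ): Q t = Q s for 0 < s ≤ t < κ
  have hconst : ∀ s ∈ Set.Ioo 0 κ, ∀ t ∈ Set.Ioo 0 κ, s ≤ t → Q t = Q s := by
    intro s hs t ht hst
    have hsub1 : Set.Icc s t ⊆ Set.Ico 0 κ := fun x hx =>
      ⟨le_of_lt (lt_of_lt_of_le hs.1 hx.1), lt_of_le_of_lt hx.2 ht.2⟩
    have hsub2 : Set.Ico s t ⊆ Set.Ioo 0 κ := fun x hx =>
      ⟨lt_of_lt_of_le hs.1 hx.1, lt_trans hx.2 ht.2⟩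
    exact constant_of_has_deriv_right_zero (hQcont.mono hsub1)
      (fun x hx => ((hQderiv x (hsub2 hx)).hasDerivWithinAt)) t ⟨hst, le_refl t⟩
  -- limit of Q as t → κ⁻
  have hQlim : Filter.Tendsto Q (nhdsWithin κ (Set.Iio κ))
      (nhds ((∑ k, (γ k : ℂ)) * conj zc)) := by
    have : Filter.Tendsto Q (nhdsWithin κ (Set.Iio κ))
        (nhds (∑ k, (γ k : ℂ) * conj zc)) := by
      apply tendsto_finset_sum
      intro k _
      exact Filter.Tendsto.const_mul _
        ((Complex.continuous_conj.tendsto zc).comp (hlim k))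
    rwa [← Finset.sum_mul] at this
  -- Q is constantly Q s near κ⁻, for each s ∈ (0, κ)
  have hQval : ∀ s ∈ Set.Ioo 0 κ, Q s = (∑ k, (γ k : ℂ)) * conj zc := by
    intro s hs
    have hne : (nhdsWithin κ (Set.Iio κ)).NeBot := by
      exact nhdsLT_neBot κ
    have hev : ∀ᶠ t in nhdsWithin κ (Set.Iio κ), Q t = Q s := by
      have h4 : Set.Ioo s κ ∈ nhdsWithin κ (Set.Iio κ) := by
        apply mem_nhdsWithin.mpr
        exact ⟨Set.Ioi s, isOpen_Ioi, hs.2, by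
          intro x hx
          exact ⟨hx.1, hx.2⟩⟩
      filter_upwards [h4] with t ht
      exact hconst s hs t ⟨lt_trans hs.1 ht.1, ht.2⟩ (le_of_lt ht.1)
    have : Filter.Tendsto Q (nhdsWithin κ (Set.Iio κ)) (nhds (Q s)) := by
      rw [Filter.tendsto_congr' hev]
      exact tendsto_const_nhds
    exact tendsto_nhds_unique this hQlim
  -- take s → 0⁺ to get Q 0 = (∑ γ) conj zc
  have hQ0 : Q 0 = (∑ k, (γ k : ℂ)) * conj zc := by
    have hne : (nhdsWithin (0:ℝ) (Set.Ioo 0 κ)).NeBot := by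
      have h0 : (0:ℝ) ∈ closure (Set.Ioo 0 κ) := by
        rw [closure_Ioo hκ.ne]
        exact ⟨le_refl 0, hκ.le⟩
      exact mem_closure_iff_nhdsWithin_neBot.mp h0
    have hc : Filter.Tendsto Q (nhdsWithin (0:ℝ) (Set.Ioo 0 κ)) (nhds (Q 0)) := by
      apply (hQcont 0 ⟨le_refl 0, hκ⟩).tendsto.mono_left
      apply nhdsWithin_mono
      intro x hx
      exact ⟨le_of_lt hx.1, hx.2⟩
    have hc2 : Filter.Tendsto Q (nhdsWithin (0:ℝ) (Set.Ioo 0 κ))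
        (nhds ((∑ k, (γ k : ℂ)) * conj zc)) := by
      apply Filter.Tendsto.congr' (f₁ := fun _ => (∑ k, (γ k : ℂ)) * conj zc)
      · filter_upwards [self_mem_nhdsWithin] with s hs
        exact (hQval s hs).symm
      · exact tendsto_const_nhds
    exact tendsto_nhds_unique hc hc2
  -- conclude
  have hQ0' : conj (∑ k, (γ k : ℂ) * z k 0) = conj ((∑ k, (γ k : ℂ)) * zc) := by
    rw [map_sum, map_mul]
    simp only [map_mul, Complex.conj_ofReal] at hQ0 ⊢
    convert hQ0 using 2
    rw [map_sum]
    simp [Complex.conj_ofReal]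
  have hfin : (∑ k, (γ k : ℂ) * z k 0) = (∑ k, (γ k : ℂ)) * zc :=
    star_injective hQ0'
  have hγC : (∑ k, (γ k : ℂ)) ≠ 0 := by
    rw [← Complex.ofReal_sum]
    exact_mod_cast Complex.ofReal_ne_zero.mpr hγ
  field_simp [hγC]
  linear_combination -hfin
end

section
/- Let M ≥ 1, let z₁, …, z_M ∈ ℂ be pairwise distinct, γ₁, …, γ_M ∈ ℝ with Σ_k γ_k ≠ 0, and 𝛀 ∈ ℂ with 𝛀 ≠ 0. Set z_c := (Σ_k γ_k z_k)/(Σ_k γ_k) and define 𝒱̃_k := Σ_{j≠k} γ_j/(2πi (z_k − z_j)) + i𝛀·conj(z_k − z_c) for k = 1, …, M. Then the following are equivalent: (i) 𝒱_k(Λ) = 0 for all k; (ii) 𝒱̃_k = 0 for all k and z_c = 0. Moreover, proving (i) ⇒ (ii) uses the identity Σ_k γ_k 𝒱_k(Λ) = i𝛀·conj(Σ_k γ_k z_k), which holds for any such configuration. -/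
open Real Complex ComplexConjugate

/-!
The pairwise interaction `γ_k γ_j / (2πi (z_k − z_j))` is antisymmetric in `(k, j)`, so it drops
out of the `γ`-weighted sum of the velocities, leaving `Σ_k γ_k 𝒱_k = i𝛀·conj(Σ_k γ_k z_k)`.
If every `𝒱_k` vanishes and `𝛀 ≠ 0`, the centre of vorticity `Σ_k γ_k z_k` is therefore `0`,
so `z_c = 0`; and once `z_c = 0` the two systems `𝒱` and `𝒱̃` coincide.
-/

namespace Finset

theorem sum_sum_erase_eq_zero_of_antisymm {ι G : Type*} [Fintype ι] [DecidableEq ι]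
    [AddCommMonoid G] (f : ι → ι → G) (hf : ∀ j k, f j k + f k j = 0) :
    ∑ k, ∑ j ∈ univ.erase k, f k j = 0 := by
  rw [← sum_finset_product' univ.offDiag univ (fun k => univ.erase k)
    (fun p => by simp [and_comm, ne_comm])]
  refine sum_involution (fun p _ => p.swap) (fun p _ => hf p.1 p.2) (fun p hp _ => ?_)
    (fun p hp => by simpa [ne_comm] using hp) (fun p _ => p.swap_swap)
  rw [mem_offDiag] at hp
  exact fun h => hp.2.2 (congrArg Prod.fst h).symm

end Finset

theorem sum_mul_sum_erase_div_mul_sub_eq_zero {ι K : Type*} [Fintype ι] [DecidableEq ι] [Field K]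
    (γ z : ι → K) (c : K) :
    ∑ k, γ k * ∑ j ∈ Finset.univ.erase k, γ j / (c * (z k - z j)) = 0 := by
  simp_rw [Finset.mul_sum]
  refine Finset.sum_sum_erase_eq_zero_of_antisymm _ fun j k => ?_
  rw [← neg_sub (z j), mul_neg, div_neg]
  ring

theorem selfSimilar_collapse_normalization_general
    (M : ℕ) (z : Fin M → ℂ)
    (γ : Fin M → ℝ) (Om : ℂ) (hOm : Om ≠ 0)
    (zc : ℂ) (hzc : zc = (∑ k, (γ k : ℂ) * z k) / (∑ k, (γ k : ℂ)))
    (V Vt : Fin M → ℂ)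
    (hV : ∀ k, V k =
      (∑ j ∈ Finset.univ.erase k, (γ j : ℂ) / (2 * (π : ℂ) * I * (z k - z j)))
        + I * Om * conj (z k))
    (hVt : ∀ k, Vt k =
      (∑ j ∈ Finset.univ.erase k, (γ j : ℂ) / (2 * (π : ℂ) * I * (z k - z j)))
        + I * Om * conj (z k - zc)) :
    ((∀ k, V k = 0) ↔ ((∀ k, Vt k = 0) ∧ zc = 0)) ∧
      ∑ k, (γ k : ℂ) * V k = I * Om * conj (∑ k, (γ k : ℂ) * z k) := by
  have hsum : ∑ k, (γ k : ℂ) * V k = I * Om * conj (∑ k, (γ k : ℂ) * z k) := by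
    simp only [hV, mul_add, Finset.sum_add_distrib]
    rw [sum_mul_sum_erase_div_mul_sub_eq_zero, zero_add, map_sum, Finset.mul_sum]
    refine Finset.sum_congr rfl fun k _ => ?_
    rw [map_mul, conj_ofReal]
    ring
  have hVt_eq_V (hc : zc = 0) (k : Fin M) : Vt k = V k := by rw [hVt, hV, hc, sub_zero]
  refine ⟨⟨fun hV0 => ?_, fun ⟨hVt0, hc⟩ k => hVt_eq_V hc k ▸ hVt0 k⟩, hsum⟩
  have hcenter : ∑ k, (γ k : ℂ) * z k = 0 := by
    have h := hsum.symm
    simp only [hV0, mul_zero, Finset.sum_const_zero, mul_eq_zero, I_ne_zero, hOm, false_or,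
      map_eq_zero] at h
    exact h
  have hc : zc = 0 := by rw [hzc, hcenter, zero_div]
  exact ⟨fun k => (hVt_eq_V hc k).trans (hV0 k), hc⟩

/-- **Normalizing the collapse point to the origin.**  Let `M ≥ 1`, let `z₁, …, z_M ∈ ℂ` be
pairwise distinct, `γ₁, …, γ_M ∈ ℝ` with `Σ_k γ_k ≠ 0`, and `𝛀 ∈ ℂ` with `𝛀 ≠ 0`.  Set
`z_c = (Σ_k γ_k z_k)/(Σ_k γ_k)`,
`𝒱_k = Σ_{j≠k} γ_j/(2πi (z_k − z_j)) + i𝛀·conj(z_k)`, and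
`𝒱̃_k = Σ_{j≠k} γ_j/(2πi (z_k − z_j)) + i𝛀·conj(z_k − z_c)`.  Then
`(∀ k, 𝒱_k = 0) ↔ ((∀ k, 𝒱̃_k = 0) ∧ z_c = 0)`; moreover the identity
`Σ_k γ_k 𝒱_k = i𝛀·conj(Σ_k γ_k z_k)` holds. -/
theorem selfSimilar_collapse_normalization
    (M : ℕ) (hM : 1 ≤ M) (z : Fin M → ℂ)
    (hz : ∀ j k : Fin M, j ≠ k → z j ≠ z k)
    (γ : Fin M → ℝ) (hγ : ∑ k, γ k ≠ 0) (Om : ℂ) (hOm : Om ≠ 0)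
    (zc : ℂ) (hzc : zc = (∑ k, (γ k : ℂ) * z k) / (∑ k, (γ k : ℂ)))
    (V Vt : Fin M → ℂ)
    (hV : ∀ k, V k =
      (∑ j ∈ Finset.univ.erase k, (γ j : ℂ) / (2 * (π : ℂ) * I * (z k - z j)))
        + I * Om * conj (z k))
    (hVt : ∀ k, Vt k =
      (∑ j ∈ Finset.univ.erase k, (γ j : ℂ) / (2 * (π : ℂ) * I * (z k - z j)))
        + I * Om * conj (z k - zc)) :
    ((∀ k, V k = 0) ↔ ((∀ k, Vt k = 0) ∧ zc = 0)) ∧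
      ∑ k, (γ k : ℂ) * V k = I * Om * conj (∑ k, (γ k : ℂ) * z k) :=
  selfSimilar_collapse_normalization_general M z γ Om hOm zc hzc V Vt hV hVt
end

section
/- Let M ≥ 1, let z₁⁰, …, z_M⁰ ∈ ℂ be pairwise distinct, γ₁, …, γ_M ∈ ℝ, Ω ∈ ℝ, κ > 0, and set 𝛀 := Ω − i/(2κ). Assume that 𝒱_k(Λ) = 0 for all k = 1, …, M, where Λ = (z₁⁰, …, z_M⁰, γ₁, …, γ_M, 𝛀). Define L : [0, κ) → ℂ by L(t) := (1 − t/κ)^{1/2} · exp( −i κ Ω log(1 − t/κ) ) and set z_k(t) := L(t) z_k⁰. Then: (i) the positions z₁(t), …, z_M(t) remain pairwise distinct on [0, κ) and satisfy the Kirchhoff–Helmholtz system d/dt conj(z_k(t)) = Σ_{j≠k} γ_j/(2πi (z_k(t) − z_j(t))) for all t ∈ (0, κ); and (ii) z_k(t) → 0 as t ↗ κ for every k, i.e. the configuration collapses self-similarly to the origin in the finite time κ. -/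
open Real Complex ComplexConjugate

/-- **A collapsing configuration of the system 𝒱 = 0 collapses self-similarly in finite
time.**  Let `M ≥ 1`, let `z₁⁰, …, z_M⁰ ∈ ℂ` be pairwise distinct, `γ₁, …, γ_M ∈ ℝ`,
`Ω ∈ ℝ`, `κ > 0`, and `𝛀 = Ω − i/(2κ)`.  Assume `𝒱_k(Λ) = 0` for all `k`, i.e.
`Σ_{j≠k} γ_j/(2πi (z_k⁰ − z_j⁰)) + i𝛀·conj(z_k⁰) = 0`.  With
`L(t) = (1 − t/κ)^{1/2} exp(−iκΩ log(1 − t/κ))` and `z_k(t) = L(t) z_k⁰`: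
(i) the positions remain pairwise distinct on `[0, κ)` and satisfy the Kirchhoff–Helmholtz
system `d/dt conj(z_k) = Σ_{j≠k} γ_j/(2πi (z_k − z_j))` on `(0, κ)`; and
(ii) `z_k(t) → 0` as `t ↗ κ` for every `k`. -/
theorem selfSimilar_collapse_of_nondegenerate_configuration
    (M : ℕ) (hM : 1 ≤ M) (z0 : Fin M → ℂ)
    (hz0 : ∀ j k : Fin M, j ≠ k → z0 j ≠ z0 k)
    (γ : Fin M → ℝ) (Ω κ : ℝ) (hκ : 0 < κ)
    (Om : ℂ) (hOm : Om = (Ω : ℂ) - I / (2 * (κ : ℂ)))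
    (hV : ∀ k : Fin M,
      (∑ j ∈ Finset.univ.erase k, (γ j : ℂ) / (2 * (π : ℂ) * I * (z0 k - z0 j)))
        + I * Om * conj (z0 k) = 0)
    (L : ℝ → ℂ)
    (hL : ∀ t, L t = ((Real.sqrt (1 - t / κ) : ℝ) : ℂ) *
      Complex.exp (-I * (κ : ℂ) * (Ω : ℂ) * ((Real.log (1 - t / κ) : ℝ) : ℂ)))
    (z : Fin M → ℝ → ℂ) (hz : ∀ k t, z k t = L t * z0 k) :
    (∀ t ∈ Set.Ico (0 : ℝ) κ, ∀ j k : Fin M, j ≠ k → z j t ≠ z k t) ∧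
    (∀ k : Fin M, ∀ t ∈ Set.Ioo (0 : ℝ) κ,
      HasDerivAt (fun s => conj (z k s))
        (∑ j ∈ Finset.univ.erase k, (γ j : ℂ) / (2 * (π : ℂ) * I * (z k t - z j t))) t) ∧
    (∀ k : Fin M, Filter.Tendsto (z k) (nhdsWithin κ (Set.Iio κ)) (nhds 0)) := by
  have hκ' : (κ : ℂ) ≠ 0 := by exact_mod_cast hκ.ne'
  have hupos : ∀ t : ℝ, t < κ → 0 < 1 - t / κ := fun t ht => by
    rw [sub_pos, div_lt_one hκ]; exact ht
  have hLne : ∀ t : ℝ, t < κ → L t ≠ 0 := fun t ht => by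
    rw [hL]
    exact mul_ne_zero (by exact_mod_cast (Real.sqrt_pos.2 (hupos t ht)).ne')
      (Complex.exp_ne_zero _)
  refine ⟨?_, ?_, ?_⟩
  · intro t ht j k hjk h
    rw [hz, hz] at h
    exact hz0 j k hjk (mul_left_cancel₀ (hLne t ht.2) h)
  · intro k t ht
    obtain ⟨ht0, htκ⟩ := ht
    set u : ℝ := 1 - t / κ with hu_def
    have hu0 : 0 < u := hupos t htκ
    have hsq : Real.sqrt u ≠ 0 := (Real.sqrt_pos.2 hu0).ne'
    have hsqC : ((Real.sqrt u : ℝ) : ℂ) ≠ 0 := by exact_mod_cast hsq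
    have huC : ((u : ℝ) : ℂ) ≠ 0 := by exact_mod_cast hu0.ne'
    have key : ((Real.sqrt u : ℝ) : ℂ) * ((Real.sqrt u : ℝ) : ℂ) = (u : ℂ) := by
      exact_mod_cast congrArg (fun r : ℝ => (r : ℂ)) (Real.mul_self_sqrt hu0.le)
    have h1 : HasDerivAt (fun s : ℝ => 1 - s / κ) (-(1 / κ)) t := by
      simpa using ((hasDerivAt_id t).div_const κ).const_sub 1
    have h2 : HasDerivAt (fun s : ℝ => Real.sqrt (1 - s / κ))
        (1 / (2 * Real.sqrt u) * -(1 / κ)) t :=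
      (Real.hasDerivAt_sqrt hu0.ne').comp t h1
    have h3 : HasDerivAt (fun s : ℝ => Real.log (1 - s / κ)) (u⁻¹ * -(1 / κ)) t :=
      by have := (Real.hasDerivAt_log hu0.ne').comp t h1; exact this
    have h4 : HasDerivAt
        (fun s : ℝ => Complex.exp (I * κ * Ω * ((Real.log (1 - s / κ) : ℝ) : ℂ)))
        (Complex.exp (I * κ * Ω * ((Real.log u : ℝ) : ℂ)) *
          (I * κ * Ω * ((u⁻¹ * -(1 / κ) : ℝ) : ℂ))) t :=
      ((h3.ofReal_comp).const_mul (I * (κ : ℂ) * (Ω : ℂ))).cexp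
    have h5 := (h2.ofReal_comp.mul h4).mul_const (conj (z0 k))
    have hfun : (fun s => conj (z k s)) =
        (fun s : ℝ => ((Real.sqrt (1 - s / κ) : ℝ) : ℂ) *
          Complex.exp (I * κ * Ω * ((Real.log (1 - s / κ) : ℝ) : ℂ)) * conj (z0 k)) := by
      funext s
      rw [hz, hL, map_mul, map_mul]
      congr 1
      congr 1
      · simp
      · rw [← Complex.exp_conj]
        congr 1
        simp only [map_mul, map_neg, Complex.conj_I, Complex.conj_ofReal]
        ring
    rw [hfun]
    refine h5.congr_deriv ?_
    symm
    -- derivative values equality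
    have hVk : (∑ j ∈ Finset.univ.erase k, (γ j : ℂ) / (2 * (π : ℂ) * I * (z0 k - z0 j)))
        = -(I * Om * conj (z0 k)) := by linear_combination hV k
    have hS : (∑ j ∈ Finset.univ.erase k, (γ j : ℂ) / (2 * (π : ℂ) * I * (z k t - z j t)))
        = (L t)⁻¹ * ∑ j ∈ Finset.univ.erase k,
            (γ j : ℂ) / (2 * (π : ℂ) * I * (z0 k - z0 j)) := by
      rw [Finset.mul_sum]
      refine Finset.sum_congr rfl fun j hj => ?_
      have hjk : j ≠ k := Finset.ne_of_mem_erase hj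
      have hne : z0 k - z0 j ≠ 0 := sub_ne_zero.2 (hz0 k j hjk.symm)
      have hL0 : L t ≠ 0 := hLne t htκ
      have hπ : ((π : ℝ) : ℂ) ≠ 0 := by exact_mod_cast Real.pi_ne_zero
      rw [hz, hz]
      field_simp
    have hexp : Complex.exp (-I * (κ : ℂ) * (Ω : ℂ) * ((Real.log u : ℝ) : ℂ))
        = (Complex.exp (I * (κ : ℂ) * (Ω : ℂ) * ((Real.log u : ℝ) : ℂ)))⁻¹ := by
      rw [← Complex.exp_neg]
      congr 1
      ring
    have hE : Complex.exp (I * (κ : ℂ) * (Ω : ℂ) * ((Real.log u : ℝ) : ℂ)) ≠ 0 :=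
      Complex.exp_ne_zero _
    rw [hS, hVk, hOm, hL, ← hu_def, hexp]
    push_cast
    rw [← key]
    field_simp
    linear_combination (conj (z0 k)) * Complex.I_sq
  · intro k
    rw [tendsto_zero_iff_norm_tendsto_zero]
    have hnorm : ∀ t : ℝ, ‖z k t‖ = Real.sqrt (1 - t / κ) * ‖z0 k‖ := by
      intro t
      rw [hz, hL, norm_mul, norm_mul]
      have h1 : ‖((Real.sqrt (1 - t / κ) : ℝ) : ℂ)‖ = Real.sqrt (1 - t / κ) := by
        rw [Complex.norm_real, Real.norm_eq_abs, _root_.abs_of_nonneg (Real.sqrt_nonneg _)]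
      have h2 : ‖Complex.exp (-I * (κ : ℂ) * (Ω : ℂ) * ((Real.log (1 - t / κ) : ℝ) : ℂ))‖
          = 1 := by
        rw [Complex.norm_exp]
        norm_num [Complex.mul_re, Complex.mul_im]
      rw [h1, h2, mul_one]
    simp only [hnorm]
    have hc : Filter.Tendsto (fun t : ℝ => Real.sqrt (1 - t / κ) * ‖z0 k‖)
        (nhds κ) (nhds (Real.sqrt (1 - κ / κ) * ‖z0 k‖)) := by
      exact ((Real.continuous_sqrt.comp (by continuity)).mul continuous_const).tendsto κ
    have : Real.sqrt (1 - κ / κ) * ‖z0 k‖ = 0 := by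
      rw [div_self hκ.ne', sub_self, Real.sqrt_zero, zero_mul]
    rw [this] at hc
    exact hc.mono_left nhdsWithin_le_nhds
end
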